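/- One-step simulation: if M reduces to N in one step of the dBang reduction (dereliction, beta-at-a-distance, or substitution-at-a-distance rule applied at the root), then for every resource term m approximating M, either m reduces (in the resource calculus) to the empty sum, or m reduces to some resource term n approximating N. -/

import Mathlib

namespace DBangPaper

/-- dBang terms (with ⊥ used for Böhm approximants). -/
inductive DTerm : Type
  | var : ℕ → DTerm
  | lam : ℕ → DTerm → DTerm
  | app : DTerm → DTerm → DTerm
  | bang : DTerm → DTerm
  | der : DTerm → DTerm
  | sub : DTerm → ℕ → DTerm → DTerm   -- `sub M x N` is M[N/x]
  | bot : DTerm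
  deriving DecidableEq

/-- meta-level substitution M{N/x} (written `dsubst N x M`). -/
def dsubst (N : DTerm) (x : ℕ) : DTerm → DTerm
  | .var y => if y = x then N else .var y
  | .lam y M => if y = x then .lam y M else .lam y (dsubst N x M)
  | .app M P => .app (dsubst N x M) (dsubst N x P)
  | .bang M => .bang (dsubst N x M)
  | .der M => .der (dsubst N x M)
  | .sub M y P =>
      if y = x then .sub M y (dsubst N x P)
      else .sub (dsubst N x M) y (dsubst N x P)
  | .bot => .bot

/-- list contexts L = □[N₁/x₁]…[Nₖ/xₖ], applied to a term. -/
def lfill (l : List (ℕ × DTerm)) (M : DTerm) : DTerm :=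
  l.foldl (fun A p => .sub A p.1 p.2) M

/-- root (at-a-distance) reduction rules of dBang. -/
inductive Root : DTerm → DTerm → Prop
  | der (l N) : Root (.der (lfill l (.bang N))) (lfill l N)
  | beta (l x M N) : Root (.app (lfill l (.lam x M)) N) (lfill l (.sub M x N))
  | subst (M x l N) : Root (.sub M x (lfill l (.bang N))) (lfill l (dsubst N x M))

/-- full one-step dBang reduction (closure under all contexts). -/
inductive Step : DTerm → DTerm → Prop
  | root {M N} : Root M N → Step M N
  | lam (x) {M N} : Step M N → Step (.lam x M) (.lam x N)
  | appL {M M'} (N) : Step M M' → Step (.app M N) (.app M' N)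
  | appR (M) {N N'} : Step N N' → Step (.app M N) (.app M N')
  | bang {M N} : Step M N → Step (.bang M) (.bang N)
  | der {M N} : Step M N → Step (.der M) (.der N)
  | subL {M M'} (x N) : Step M M' → Step (.sub M x N) (.sub M' x N)
  | subR (M x) {N N'} : Step N N' → Step (.sub M x N) (.sub M x N')

/-- surface one-step dBang reduction (not under a bang). -/
inductive SStep : DTerm → DTerm → Prop
  | root {M N} : Root M N → SStep M N
  | lam (x) {M N} : SStep M N → SStep (.lam x M) (.lam x N)
  | appL {M M'} (N) : SStep M M' → SStep (.app M N) (.app M' N)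
  | appR (M) {N N'} : SStep N N' → SStep (.app M N) (.app M N')
  | der {M N} : SStep M N → SStep (.der M) (.der N)
  | subL {M M'} (x N) : SStep M M' → SStep (.sub M x N) (.sub M' x N)
  | subR (M x) {N N'} : SStep N N' → SStep (.sub M x N) (.sub M x N')

def Steps : DTerm → DTerm → Prop := Relation.ReflTransGen Step
def SSteps : DTerm → DTerm → Prop := Relation.ReflTransGen SStep

/-- resource (δBang) terms: bags of terms replace bangs. -/
inductive RTerm : Type
  | var : ℕ → RTerm
  | lam : ℕ → RTerm → RTerm
  | app : RTerm → RTerm → RTerm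
  | bag : List RTerm → RTerm
  | der : RTerm → RTerm
  | sub : RTerm → ℕ → RTerm → RTerm

mutual
  /-- linear (resource) substitution: `LSub m x ps m'` means m' is one result of
      substituting the resources `ps` linearly for the occurrences of x in m. -/
  inductive LSub : RTerm → ℕ → List RTerm → RTerm → Prop
    | varHit (x p) : LSub (.var x) x [p] p
    | varMiss {y x : ℕ} (h : y ≠ x) : LSub (.var y) x [] (.var y)
    | lam {m x ps m'} (y : ℕ) (hy : y ≠ x) :
        LSub m x ps m' → LSub (.lam y m) x ps (.lam y m')
    | app {m n x ps qs rs m' n'} : LSub m x ps m' → LSub n x qs n' →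
        (ps ++ qs).Perm rs → LSub (.app m n) x rs (.app m' n')
    | der {m x ps m'} : LSub m x ps m' → LSub (.der m) x ps (.der m')
    | sub {m n x ps qs rs m' n'} (y : ℕ) (hy : y ≠ x) : LSub m x ps m' →
        LSub n x qs n' → (ps ++ qs).Perm rs → LSub (.sub m y n) x rs (.sub m' y n')
    | bag {ms x ps ms'} : LSubs ms x ps ms' → LSub (.bag ms) x ps (.bag ms')
  inductive LSubs : List RTerm → ℕ → List RTerm → List RTerm → Prop
    | nil (x) : LSubs [] x [] []
    | cons {m ms x ps qs rs m' ms'} : LSub m x ps m' → LSubs ms x qs ms' →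
        (ps ++ qs).Perm rs → LSubs (m :: ms) x rs (m' :: ms')
end

/-- resource list contexts. -/
def rfill (l : List (ℕ × RTerm)) (m : RTerm) : RTerm :=
  l.foldl (fun a p => .sub a p.1 p.2) m

/-- root resource reduction (producing a single term of the resulting sum). -/
inductive RRoot : RTerm → RTerm → Prop
  | der (l n) : RRoot (.der (rfill l (.bag [n]))) (rfill l n)
  | beta (l x m p) : RRoot (.app (rfill l (.lam x m)) p) (rfill l (.sub m x p))
  | subst {m : RTerm} {x ps m'} (l) : LSub m x ps m' →
      RRoot (.sub m x (rfill l (.bag ps))) (rfill l m')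

/-- root resource reduction to the empty sum ∅ (arity mismatch). -/
inductive RRootE : RTerm → Prop
  | der (l ms) (h : ms.length ≠ 1) : RRootE (.der (rfill l (.bag ms)))
  | subst (m x ps l) (h : ¬ ∃ m', LSub m x ps m') :
      RRootE (.sub m x (rfill l (.bag ps)))

/-- full one-step resource reduction (to a term of the resulting sum). -/
inductive RStep : RTerm → RTerm → Prop
  | root {m n} : RRoot m n → RStep m n
  | lam (x) {m n} : RStep m n → RStep (.lam x m) (.lam x n)
  | appL {m m'} (n) : RStep m m' → RStep (.app m n) (.app m' n)
  | appR (m) {n n'} : RStep n n' → RStep (.app m n) (.app m n')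
  | der {m n} : RStep m n → RStep (.der m) (.der n)
  | subL {m m'} (x n) : RStep m m' → RStep (.sub m x n) (.sub m' x n)
  | subR (m x) {n n'} : RStep n n' → RStep (.sub m x n) (.sub m x n')
  | bag {m m'} (pre post) : RStep m m' →
      RStep (.bag (pre ++ m :: post)) (.bag (pre ++ m' :: post))

/-- full one-step resource reduction to the empty sum. -/
inductive REmpty : RTerm → Prop
  | root {m} : RRootE m → REmpty m
  | lam (x) {m} : REmpty m → REmpty (.lam x m)
  | appL {m} (n) : REmpty m → REmpty (.app m n)
  | appR (m) {n} : REmpty n → REmpty (.app m n)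
  | der {m} : REmpty m → REmpty (.der m)
  | subL {m} (x n) : REmpty m → REmpty (.sub m x n)
  | subR (m x) {n} : REmpty n → REmpty (.sub m x n)
  | bag {m} (pre post) : REmpty m → REmpty (.bag (pre ++ m :: post))

/-- surface one-step resource reduction. -/
inductive RSStep : RTerm → RTerm → Prop
  | root {m n} : RRoot m n → RSStep m n
  | lam (x) {m n} : RSStep m n → RSStep (.lam x m) (.lam x n)
  | appL {m m'} (n) : RSStep m m' → RSStep (.app m n) (.app m' n)
  | appR (m) {n n'} : RSStep n n' → RSStep (.app m n) (.app m n')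
  | der {m n} : RSStep m n → RSStep (.der m) (.der n)
  | subL {m m'} (x n) : RSStep m m' → RSStep (.sub m x n) (.sub m' x n)
  | subR (m x) {n n'} : RSStep n n' → RSStep (.sub m x n) (.sub m x n')

/-- surface one-step resource reduction to the empty sum. -/
inductive RSEmpty : RTerm → Prop
  | root {m} : RRootE m → RSEmpty m
  | lam (x) {m} : RSEmpty m → RSEmpty (.lam x m)
  | appL {m} (n) : RSEmpty m → RSEmpty (.app m n)
  | appR (m) {n} : RSEmpty n → RSEmpty (.app m n)
  | der {m} : RSEmpty m → RSEmpty (.der m)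
  | subL {m} (x n) : RSEmpty m → RSEmpty (.sub m x n)
  | subR (m x) {n} : RSEmpty n → RSEmpty (.sub m x n)

def RSteps : RTerm → RTerm → Prop := Relation.ReflTransGen RStep

/-- the approximation relation m ⊲ M between resource terms and dBang terms. -/
inductive Approx : RTerm → DTerm → Prop
  | var (x) : Approx (.var x) (.var x)
  | lam {m M} (x) : Approx m M → Approx (.lam x m) (.lam x M)
  | app {m M n N} : Approx m M → Approx n N → Approx (.app m n) (.app M N)
  | bang {ms M} : (∀ m ∈ ms, Approx m M) → Approx (.bag ms) (.bang M)
  | der {m M} : Approx m M → Approx (.der m) (.der M)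
  | sub {m M n N} (x) : Approx m M → Approx n N → Approx (.sub m x n) (.sub M x N)

/-- Taylor expansion of a dBang term. -/
def Taylor (M : DTerm) : Set RTerm := {m | Approx m M}

/-- a resource term is normal when it has no redex (no reduction, not even to ∅). -/
def RNormal (m : RTerm) : Prop := (¬ ∃ n, RStep m n) ∧ ¬ REmpty m

/-- normal-form Taylor expansion. -/
def NFTaylor (M : DTerm) : Set RTerm :=
  {n | RNormal n ∧ ∃ m, Approx m M ∧ RSteps m n}

/-- M is of the shape L⟨!N⟩. -/
def IsBangCtx (M : DTerm) : Prop := ∃ l N, M = lfill l (.bang N)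

/-- M is of the shape L⟨λx.N⟩. -/
def IsLamCtx (M : DTerm) : Prop := ∃ l x N, M = lfill l (.lam x N)

/-- dBang Böhm approximants. -/
inductive IsApprox : DTerm → Prop
  | bot : IsApprox .bot
  | var (x) : IsApprox (.var x)
  | lam (x) {A} : IsApprox A → IsApprox (.lam x A)
  | bang {A} : IsApprox A → IsApprox (.bang A)
  | der {A} : IsApprox A → ¬ IsBangCtx A → IsApprox (.der A)
  | app {A B} : IsApprox A → IsApprox B → ¬ IsLamCtx A → IsApprox (.app A B)
  | sub {A B} (x) : IsApprox A → IsApprox B → ¬ IsBangCtx B → IsApprox (.sub A x B)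

/-- the approximation order: A ⊑ M when A is obtained from M by replacing
    subterms by ⊥. -/
inductive SqSub : DTerm → DTerm → Prop
  | bot (M) : SqSub .bot M
  | var (x) : SqSub (.var x) (.var x)
  | lam (x) {A M} : SqSub A M → SqSub (.lam x A) (.lam x M)
  | app {A M B N} : SqSub A M → SqSub B N → SqSub (.app A B) (.app M N)
  | bang {A M} : SqSub A M → SqSub (.bang A) (.bang M)
  | der {A M} : SqSub A M → SqSub (.der A) (.der M)
  | sub {A M B N} (x) : SqSub A M → SqSub B N → SqSub (.sub A x B) (.sub M x N)

/-- the set of Böhm approximants of M. -/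
def BohmSet (M : DTerm) : Set DTerm :=
  {A | IsApprox A ∧ ∃ N, Steps M N ∧ SqSub A N}

/-- Taylor expansion of the Böhm tree of M. -/
def TaylorBT (M : DTerm) : Set RTerm :=
  {m | ∃ A ∈ BohmSet M, Approx m A}

/-- testing contexts T ::= □ | T N | (λx.T) N. -/
inductive TCtx : Type
  | hole : TCtx
  | app : TCtx → DTerm → TCtx
  | lapp : ℕ → TCtx → DTerm → TCtx

def tfill : TCtx → DTerm → DTerm
  | .hole, M => M
  | .app T N, M => .app (tfill T M) N
  | .lapp x T N, M => .app (.lam x (tfill T M)) N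

/-- meaningfulness in dBang. -/
def Meaningful (M : DTerm) : Prop := ∃ T P, SSteps (tfill T M) (.bang P)

/-- the call-by-name fragment dBang_N. -/
inductive InN : DTerm → Prop
  | var (x) : InN (.var x)
  | lam (x) {M} : InN M → InN (.lam x M)
  | app {M N} : InN M → InN N → InN (.app M (.bang N))
  | sub {M N} (x) : InN M → InN N → InN (.sub M x (.bang N))

/-! ### dCBN / dCBV -/

/-- terms of dCBN and dCBV (with ⊥ for approximants). -/
inductive NTerm : Type
  | var : ℕ → NTerm
  | lam : ℕ → NTerm → NTerm
  | app : NTerm → NTerm → NTerm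
  | sub : NTerm → ℕ → NTerm → NTerm
  | bot : NTerm
  deriving DecidableEq

def nsubst (N : NTerm) (x : ℕ) : NTerm → NTerm
  | .var y => if y = x then N else .var y
  | .lam y M => if y = x then .lam y M else .lam y (nsubst N x M)
  | .app M P => .app (nsubst N x M) (nsubst N x P)
  | .sub M y P =>
      if y = x then .sub M y (nsubst N x P)
      else .sub (nsubst N x M) y (nsubst N x P)
  | .bot => .bot

def nlfill (l : List (ℕ × NTerm)) (M : NTerm) : NTerm :=
  l.foldl (fun A p => .sub A p.1 p.2) M

def IsValueN : NTerm → Prop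
  | .var _ => True
  | .lam _ _ => True
  | _ => False

/-- dCBN reduction. -/
inductive RootN : NTerm → NTerm → Prop
  | beta (l x M N) : RootN (.app (nlfill l (.lam x M)) N) (nlfill l (.sub M x N))
  | subst (M x N) : RootN (.sub M x N) (nsubst N x M)

inductive StepN : NTerm → NTerm → Prop
  | root {M N} : RootN M N → StepN M N
  | lam (x) {M N} : StepN M N → StepN (.lam x M) (.lam x N)
  | appL {M M'} (N) : StepN M M' → StepN (.app M N) (.app M' N)
  | appR (M) {N N'} : StepN N N' → StepN (.app M N) (.app M N')
  | subL {M M'} (x N) : StepN M M' → StepN (.sub M x N) (.sub M' x N)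
  | subR (M x) {N N'} : StepN N N' → StepN (.sub M x N) (.sub M x N')

/-- dCBV reduction. -/
inductive RootV : NTerm → NTerm → Prop
  | beta (l x M N) : RootV (.app (nlfill l (.lam x M)) N) (nlfill l (.sub M x N))
  | subst (M x l) {V} (hV : IsValueN V) :
      RootV (.sub M x (nlfill l V)) (nlfill l (nsubst V x M))

inductive StepV : NTerm → NTerm → Prop
  | root {M N} : RootV M N → StepV M N
  | lam (x) {M N} : StepV M N → StepV (.lam x M) (.lam x N)
  | appL {M M'} (N) : StepV M M' → StepV (.app M N) (.app M' N)
  | appR (M) {N N'} : StepV N N' → StepV (.app M N) (.app M N')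
  | subL {M M'} (x N) : StepV M M' → StepV (.sub M x N) (.sub M' x N)
  | subR (M x) {N N'} : StepV N N' → StepV (.sub M x N) (.sub M x N')

def StepsN : NTerm → NTerm → Prop := Relation.ReflTransGen StepN
def StepsV : NTerm → NTerm → Prop := Relation.ReflTransGen StepV

/-- the call-by-name translation into dBang. -/
def tradN : NTerm → DTerm
  | .var x => .var x
  | .lam x M => .lam x (tradN M)
  | .app M N => .app (tradN M) (.bang (tradN N))
  | .sub M x N => .sub (tradN M) x (.bang (tradN N))
  | .bot => .bot

/-- decompose M = L⟨!P⟩, returning L⟨P⟩. -/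
def debang : DTerm → Option DTerm
  | .bang P => some P
  | .sub M x N => (debang M).map fun M' => .sub M' x N
  | _ => none

/-- the call-by-value translation into dBang. -/
def tradV : NTerm → DTerm
  | .var x => .bang (.var x)
  | .lam x M => .bang (.lam x (tradV M))
  | .app M N =>
      match debang (tradV M) with
      | some Q => .app Q (tradV N)
      | none => .app (.der (tradV M)) (tradV N)
  | .sub M x N => .sub (tradV M) x (tradV N)
  | .bot => .bot

/-- the CbN approximation relation ⊲ₙ. -/
inductive ApproxN : RTerm → NTerm → Prop
  | var (x) : ApproxN (.var x) (.var x)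
  | lam {m M} (x) : ApproxN m M → ApproxN (.lam x m) (.lam x M)
  | app {m M ns N} : ApproxN m M → (∀ n ∈ ns, ApproxN n N) →
      ApproxN (.app m (.bag ns)) (.app M N)
  | sub {m M ns N} (x) : ApproxN m M → (∀ n ∈ ns, ApproxN n N) →
      ApproxN (.sub m x (.bag ns)) (.sub M x N)

def TaylorN (M : NTerm) : Set RTerm := {m | ApproxN m M}

/-- the CbV approximation relation ⊲ᵥ. -/
inductive ApproxV : RTerm → NTerm → Prop
  | var (x k) : ApproxV (.bag (List.replicate k (.var x))) (.var x)
  | lam {ms : List RTerm} {M} (x) : (∀ m ∈ ms, ApproxV m M) →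
      ApproxV (.bag (ms.map (RTerm.lam x))) (.lam x M)
  | appN {m M n N} : ¬ IsValueN M → ApproxV m M → ApproxV n N →
      ApproxV (.app (.der m) n) (.app M N)
  | appV {m V n N} : IsValueN V → ApproxV (.bag [m]) V → ApproxV n N →
      ApproxV (.app m n) (.app V N)
  | sub {m M n N} (x) : ApproxV m M → ApproxV n N →
      ApproxV (.sub m x n) (.sub M x N)

def TaylorV (M : NTerm) : Set RTerm := {m | ApproxV m M}

def NFTaylorN (M : NTerm) : Set RTerm :=
  {n | RNormal n ∧ ∃ m, ApproxN m M ∧ RSteps m n}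

def NFTaylorV (M : NTerm) : Set RTerm :=
  {n | RNormal n ∧ ∃ m, ApproxV m M ∧ RSteps m n}

/-- order A ⊑ M on dCBN/dCBV terms. -/
inductive SqSubN : NTerm → NTerm → Prop
  | bot (M) : SqSubN .bot M
  | var (x) : SqSubN (.var x) (.var x)
  | lam (x) {A M} : SqSubN A M → SqSubN (.lam x A) (.lam x M)
  | app {A M B N} : SqSubN A M → SqSubN B N → SqSubN (.app A B) (.app M N)
  | sub {A M B N} (x) : SqSubN A M → SqSubN B N → SqSubN (.sub A x B) (.sub M x N)

mutual
  /-- CbN Böhm approximants Aₙ. -/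
  inductive IsAN : NTerm → Prop
    | bot : IsAN .bot
    | ofNlam {A} : IsNlam A → IsAN A
    | lam (x) {A} : IsAN A → IsAN (.lam x A)
  /-- head shapes N_λ. -/
  inductive IsNlam : NTerm → Prop
    | var (x) : IsNlam (.var x)
    | app {A B} : IsNlam A → IsAN B → IsNlam (.app A B)
end

def BTnSet (M : NTerm) : Set NTerm :=
  {A | IsAN A ∧ ∃ N, StepsN M N ∧ SqSubN A N}

mutual
  /-- CbV Böhm approximants Aᵥ. -/
  inductive IsAV : NTerm → Prop
    | bot : IsAV .bot
    | ofAlam {A} : IsAlam A → IsAV A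
    | lam (x) {A} : IsAV A → IsAV (.lam x A)
    | sub (x) {A B} : IsAV A → IsAxlam B → IsAV (.sub A x B)
  inductive IsAlam : NTerm → Prop
    | var (x) : IsAlam (.var x)
    | app {A B} : IsAlam A → IsAV B → IsAlam (.app A B)
    | sub (x) {A B} : IsAlam A → IsAxlam B → IsAlam (.sub A x B)
  inductive IsAxlam : NTerm → Prop
    | app {A B} : IsAlam A → IsAV B → IsAxlam (.app A B)
    | sub (x) {A B} : IsAxlam A → IsAxlam B → IsAxlam (.sub A x B)
end

def BTvSet (M : NTerm) : Set NTerm :=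
  {A | IsAV A ∧ ∃ N, StepsV M N ∧ SqSubN A N}

def TaylorBTn (M : NTerm) : Set RTerm := {m | ∃ A ∈ BTnSet M, ApproxN m A}
def TaylorBTv (M : NTerm) : Set RTerm := {m | ∃ A ∈ BTvSet M, ApproxV m A}

/-! An approximant of a root redex is a root redex of the resource calculus: approximating
`L⟨!N⟩` forces the shape `L'⟨[n₁,…,nₖ]⟩` with `L'` approximating `L` pointwise. Dereliction then
fires when `k = 1` and substitution when the linear substitution exists; otherwise the redex
reduces to `∅`. Beta always fires. The reducts approximate the dBang reducts because filling list
contexts preserves approximation, and linearly substituting approximants of `N` into an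
approximant of `M` approximates `M{N/x}`. -/

def CtxApprox : List (ℕ × RTerm) → List (ℕ × DTerm) → Prop :=
  List.Forall₂ fun p q => p.1 = q.1 ∧ Approx p.2 q.2

theorem CtxApprox.approx_rfill {l' : List (ℕ × RTerm)} {l : List (ℕ × DTerm)}
    (hl : CtxApprox l' l) {a : RTerm} {A : DTerm} (h : Approx a A) :
    Approx (rfill l' a) (lfill l A) := by
  induction hl generalizing a A with
  | nil => exact h
  | @cons p q _ _ hpq _ ih =>
    obtain ⟨hvar, happrox⟩ := hpq
    exact ih (show Approx (.sub a p.1 p.2) (.sub A q.1 q.2) from hvar ▸ .sub _ h happrox)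

theorem Approx.exists_of_lfill {l : List (ℕ × DTerm)} {m : RTerm} {A : DTerm}
    (h : Approx m (lfill l A)) : ∃ l' a, m = rfill l' a ∧ CtxApprox l' l ∧ Approx a A := by
  induction l generalizing m A with
  | nil => exact ⟨[], m, rfl, .nil, h⟩
  | cons p l ih =>
    obtain ⟨l', a, rfl, hl, ha⟩ := ih h
    cases ha with
    | sub x ha hp => exact ⟨(p.1, _) :: l', _, rfl, .cons ⟨rfl, hp⟩ hl, ha⟩

theorem Approx.exists_of_lfill_bang {l : List (ℕ × DTerm)} {m : RTerm} {N : DTerm}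
    (h : Approx m (lfill l (.bang N))) :
    ∃ l' ps, m = rfill l' (.bag ps) ∧ CtxApprox l' l ∧ ∀ p ∈ ps, Approx p N := by
  obtain ⟨l', a, rfl, hl, ha⟩ := h.exists_of_lfill
  cases ha with
  | bang hps => exact ⟨l', _, rfl, hl, hps⟩

theorem Approx.exists_of_lfill_lam {l : List (ℕ × DTerm)} {m : RTerm} {x : ℕ} {M : DTerm}
    (h : Approx m (lfill l (.lam x M))) :
    ∃ l' a, m = rfill l' (.lam x a) ∧ CtxApprox l' l ∧ Approx a M := by
  obtain ⟨l', a, rfl, hl, ha⟩ := h.exists_of_lfill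
  cases ha with
  | lam _ ha => exact ⟨l', _, rfl, hl, ha⟩

mutual

theorem LSub.approx_dsubst {m : RTerm} {x : ℕ} {ps : List RTerm} {m' : RTerm}
    (h : LSub m x ps m') {M P : DTerm} (hm : Approx m M) (hps : ∀ p ∈ ps, Approx p P) :
    Approx m' (dsubst P x M) :=
  match h, hm with
  | .varHit _ p, .var _ => by simpa [dsubst] using hps p (List.mem_singleton_self p)
  | .varMiss hyx, .var _ => by simpa [dsubst, hyx] using Approx.var _
  | .lam y hyx h, .lam _ hm => by
    simpa [dsubst, hyx] using Approx.lam y (h.approx_dsubst hm hps)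
  | .app h₁ h₂ hperm, .app hm₁ hm₂ => by
    obtain ⟨hps₁, hps₂⟩ := List.forall_mem_append.mp fun p hp => hps p (hperm.subset hp)
    exact Approx.app (h₁.approx_dsubst hm₁ hps₁) (h₂.approx_dsubst hm₂ hps₂)
  | .der h, .der hm => Approx.der (h.approx_dsubst hm hps)
  | .sub y hyx h₁ h₂ hperm, .sub _ hm₁ hm₂ => by
    obtain ⟨hps₁, hps₂⟩ := List.forall_mem_append.mp fun p hp => hps p (hperm.subset hp)
    simpa [dsubst, hyx] using
      Approx.sub y (h₁.approx_dsubst hm₁ hps₁) (h₂.approx_dsubst hm₂ hps₂)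
  | .bag h, .bang hms => Approx.bang (h.approx_dsubst hms hps)

theorem LSubs.approx_dsubst {ms : List RTerm} {x : ℕ} {ps : List RTerm} {ms' : List RTerm}
    (h : LSubs ms x ps ms') {M P : DTerm} (hms : ∀ m ∈ ms, Approx m M)
    (hps : ∀ p ∈ ps, Approx p P) : ∀ m' ∈ ms', Approx m' (dsubst P x M) :=
  match h with
  | .nil _ => by simp
  | .cons h₁ h₂ hperm => by
    obtain ⟨hps₁, hps₂⟩ := List.forall_mem_append.mp fun p hp => hps p (hperm.subset hp)
    obtain ⟨hm, hms⟩ := List.forall_mem_cons.mp hms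
    exact List.forall_mem_cons.mpr ⟨h₁.approx_dsubst hm hps₁, h₂.approx_dsubst hms hps₂⟩

end

theorem Approx.simulation_der {l : List (ℕ × DTerm)} {N : DTerm} {m : RTerm}
    (hm : Approx m (.der (lfill l (.bang N)))) :
    REmpty m ∨ ∃ n, Approx n (lfill l N) ∧ RStep m n := by
  cases hm with
  | der hm =>
    obtain ⟨l', ps, rfl, hl, hps⟩ := hm.exists_of_lfill_bang
    by_cases hlen : ps.length = 1
    · obtain ⟨p, rfl⟩ := List.length_eq_one_iff.mp hlen
      exact .inr ⟨_, hl.approx_rfill (hps p (List.mem_singleton_self p)),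
        .root (.der l' p)⟩
    · exact .inl (.root (.der l' ps hlen))

theorem Approx.simulation_beta {l : List (ℕ × DTerm)} {x : ℕ} {M N : DTerm} {m : RTerm}
    (hm : Approx m (.app (lfill l (.lam x M)) N)) :
    ∃ n, Approx n (lfill l (.sub M x N)) ∧ RStep m n := by
  cases hm with
  | app hm hn =>
    obtain ⟨l', a, rfl, hl, ha⟩ := hm.exists_of_lfill_lam
    exact ⟨_, hl.approx_rfill (.sub x ha hn), .root (.beta l' x a _)⟩

theorem Approx.simulation_subst {M : DTerm} {x : ℕ} {l : List (ℕ × DTerm)} {N : DTerm}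
    {m : RTerm} (hm : Approx m (.sub M x (lfill l (.bang N)))) :
    REmpty m ∨ ∃ n, Approx n (lfill l (dsubst N x M)) ∧ RStep m n := by
  cases hm with
  | @sub a _ _ _ _ ha hn =>
    obtain ⟨l', ps, rfl, hl, hps⟩ := hn.exists_of_lfill_bang
    by_cases hsub : ∃ a', LSub a x ps a'
    · obtain ⟨a', ha'⟩ := hsub
      exact .inr ⟨_, hl.approx_rfill (ha'.approx_dsubst ha hps), .root (.subst l' ha')⟩
    · exact .inl (.root (.subst a x ps l' hsub))

theorem one_step_simulation (M N : DTerm) (h : Root M N) :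
    ∀ m, Approx m M → REmpty m ∨ ∃ n, Approx n N ∧ RStep m n := by
  intro m hm
  cases h with
  | der => exact hm.simulation_der
  | beta => exact .inr hm.simulation_beta
  | subst => exact hm.simulation_subst

end DBangPaper
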